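/- (Proposition 5.2) Let 0 < q < 1 and 0 < a < q^{-2}. Then for all k, n ∈ ℕ the dual discrete q-ultraspherical polynomials satisfy: D_n^{(a)}(μ(2k;a)|q) = Σ_{j=0}^{n} [(q^{−2k};q²)_j (a q^{2k+1};q²)_j (q^{−2n};q²)_j] / [(a q²;q²)_j (q²;q²)_j] · (−1)^j q^{−j(j−1)} q^{(2n+1)j} and D_n^{(a)}(μ(2k+1;a)|q) = q^n · Σ_{j=0}^{n} [(q^{−2k};q²)_j (a q^{2k+3};q²)_j (q^{−2n};q²)_j] / [(a q²;q²)_j (q²;q²)_j] · (−1)^j q^{−j(j−1)} q^{(2n−1)j}. -/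

import Mathlib

open scoped BigOperators

/-- The q-shifted factorial `(a;q)_k` (the first argument is the base). -/
noncomputable def qPoch (q a : ℝ) (k : ℕ) : ℝ :=
  ∏ j ∈ Finset.range k, (1 - a * q ^ j)

/-- The dual discrete q-ultraspherical polynomials `D_n^{(a)}(μ(x;a)|q)`,
`μ(x;a) = q^{-x} + a q^{x+1}`. -/
noncomputable def dualDiscreteQUltra (q a : ℝ) (n x : ℕ) : ℝ :=
  ∑ j ∈ Finset.range (n + 1),
    qPoch q (q ^ (-(x : ℤ))) j * qPoch q (a * q ^ (x + 1)) j *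
        qPoch q (q ^ (-(n : ℤ))) j /
      (qPoch (q ^ 2) (a * q ^ 2) j * qPoch q q j) * (-q ^ (n + 1)) ^ j

/-!
For nodes `t_i` put `P_j(s) = ∏_{i<j} (1 - s t_i + a q t_i²)`; at `s = μ(x;a)` this factors as
`∏_{i<j} (1 - q^{-x} t_i) (1 - a q^{x+1} t_i)`. On the lattice `t_i = q^i` it is
`(q^{-x};q)_j (aq^{x+1};q)_j`, so `D_n = ∑_j w_{n,j} P_j(μ(x;a))`; on the lattices `t_i = q^{2i}`
with `x = 2k` and `t_i = q^{2i+1}` with `x = 2k+1` it gives the base-`q²` products of the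
right-hand sides. With suitable weights, each of the three sums `S_n(s) = ∑_j w_{n,j} P_j(s)`
satisfies, for every `s`, the three-term recurrence
`(1 - aq^{2n+4}) S_{n+2} = (1 + q - s q^{2n+3}) S_{n+1} - q (1 - q^{2n+2}) S_n`:
by Abel summation this reduces to a rational identity between neighbouring weights.
The three sums agree for `n = 0, 1`, hence for all `n`.
-/

open Finset

section QPochhammer

variable {p : ℝ}

lemma qPoch_succ (p b : ℝ) (j : ℕ) : qPoch p b (j + 1) = qPoch p b j * (1 - b * p ^ j) :=
  prod_range_succ _ _

lemma qPoch_succ' (p b : ℝ) (j : ℕ) : qPoch p b (j + 1) = (1 - b) * qPoch p (b * p) j := by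
  rw [qPoch, prod_range_succ', qPoch, pow_zero, mul_one, mul_comm]
  congr 1
  exact prod_congr rfl fun i _ => by ring

/- `qPoch p⁻¹ (p ^ n) j = ∏_{i<j} (1 - p^{n-i})`, a `p`-analogue of a falling factorial. -/

lemma qPoch_inv_pow_succ_succ (hp : p ≠ 0) (n j : ℕ) :
    qPoch p⁻¹ (p ^ (n + 1)) (j + 1) = (1 - p ^ (n + 1)) * qPoch p⁻¹ (p ^ n) j := by
  rw [qPoch_succ', pow_succ, mul_inv_cancel_right₀ hp]

lemma qPoch_inv_pow_eq_div (hp : p ≠ 0) {m : ℕ} (hm : 1 - p ^ (m + 1) ≠ 0) (j : ℕ) :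
    qPoch p⁻¹ (p ^ m) j
      = qPoch p⁻¹ (p ^ (m + 1)) j * (1 - p ^ (m + 1) * p⁻¹ ^ j) / (1 - p ^ (m + 1)) := by
  rw [eq_div_iff hm, mul_comm, ← qPoch_inv_pow_succ_succ hp, qPoch_succ]

lemma qPoch_inv_pow_eq_zero (hp : p ≠ 0) {n j : ℕ} (h : n < j) : qPoch p⁻¹ (p ^ n) j = 0 :=
  prod_eq_zero (mem_range.mpr h) (by rw [inv_pow, mul_inv_cancel₀ (pow_ne_zero n hp), sub_self])

lemma qPoch_inv_pow_mul_prod (hp : p ≠ 0) (n j : ℕ) :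
    qPoch p (p ^ n)⁻¹ j * ∏ i ∈ range j, -(p ^ n / p ^ i) = qPoch p⁻¹ (p ^ n) j := by
  rw [qPoch, qPoch, ← prod_mul_distrib]
  refine prod_congr rfl fun i _ => ?_
  have : p ^ i ≠ 0 := pow_ne_zero i hp
  rw [inv_pow]
  field_simp
  ring

lemma one_sub_mul_pow_pos {b : ℝ} (hp0 : 0 ≤ p) (hp1 : p ≤ 1) (hb : b < 1) (i : ℕ) :
    0 < 1 - b * p ^ i := by
  have h0 : 0 ≤ p ^ i := pow_nonneg hp0 i
  have h1 : p ^ i ≤ 1 := pow_le_one₀ hp0 hp1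
  rcases le_or_gt b 0 with hb0 | hb0 <;> nlinarith

lemma qPoch_pos {b : ℝ} (hp0 : 0 ≤ p) (hp1 : p ≤ 1) (hb : b < 1) (j : ℕ) :
    0 < qPoch p b j :=
  prod_pos fun i _ => one_sub_mul_pow_pos hp0 hp1 hb i

end QPochhammer

section NewtonBasis

variable (t : ℕ → ℝ) (c s : ℝ)

noncomputable def newtonBasis (j : ℕ) : ℝ :=
  ∏ i ∈ range j, (1 - s * t i + c * t i ^ 2)

lemma newtonBasis_succ (j : ℕ) :
    newtonBasis t c s (j + 1) = newtonBasis t c s j * (1 - s * t j + c * t j ^ 2) :=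
  prod_range_succ _ _

noncomputable def newtonSum (w : ℕ → ℕ → ℝ) (n : ℕ) : ℝ :=
  ∑ j ∈ range (n + 1), w n j * newtonBasis t c s j

lemma newtonSum_zero (w : ℕ → ℕ → ℝ) : newtonSum t c s w 0 = w 0 0 := by
  simp [newtonSum, newtonBasis]

lemma newtonSum_one (w : ℕ → ℕ → ℝ) :
    newtonSum t c s w 1 = w 1 0 + w 1 1 * (1 - s * t 0 + c * t 0 ^ 2) := by
  simp [newtonSum, newtonBasis, sum_range_succ]

variable {t c s}

/- Abel summation: with `δ u₁_j = t_j w_j` and `s t_j P_j = (1 + c t_j²) P_j - P_{j+1}` for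
`P = newtonBasis t c s`, the hypotheses `h0`, `hsucc` say that the coefficient of each `P_j`
vanishes. -/
lemma sum_mul_newtonBasis_recurrence {α β γ δ : ℝ} {u₀ u₁ u₂ w : ℕ → ℝ} {N : ℕ}
    (hw : ∀ j, δ * u₁ j = t j * w j) (hN : w N = 0)
    (h0 : α * u₂ 0 - β * u₁ 0 + γ * u₀ 0 + (1 + c * t 0 ^ 2) * w 0 = 0)
    (hsucc : ∀ j, α * u₂ (j + 1) - β * u₁ (j + 1) + γ * u₀ (j + 1)
      + (1 + c * t (j + 1) ^ 2) * w (j + 1) = w j) :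
    α * ∑ j ∈ range (N + 1), u₂ j * newtonBasis t c s j
      = (β - s * δ) * ∑ j ∈ range (N + 1), u₁ j * newtonBasis t c s j
        - γ * ∑ j ∈ range (N + 1), u₀ j * newtonBasis t c s j := by
  set P := newtonBasis t c s
  set E := fun j => α * u₂ j - β * u₁ j + γ * u₀ j + (1 + c * t j ^ 2) * w j
  have shift : ∑ j ∈ range (N + 1), E j * P j = ∑ j ∈ range (N + 1), w j * P (j + 1) := by
    rw [sum_range_succ (fun j => w j * P (j + 1)), hN, zero_mul, add_zero, sum_range_succ']
    simp only [E, h0, zero_mul, add_zero, hsucc]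
  have term : ∀ j, α * (u₂ j * P j) - (β - s * δ) * (u₁ j * P j) + γ * (u₀ j * P j)
      = E j * P j - w j * P (j + 1) := by
    intro j
    simp only [E, P, newtonBasis_succ]
    linear_combination (s * newtonBasis t c s j) * hw j
  have hsum := sum_congr rfl fun j (_ : j ∈ range (N + 1)) => term j
  rw [sum_sub_distrib, shift, sub_self] at hsum
  simp only [sum_add_distrib, sum_sub_distrib, ← mul_sum] at hsum
  linear_combination hsum

lemma newtonSum_eq_sum_range {w : ℕ → ℕ → ℝ} (hw : ∀ n j, n < j → w n j = 0)
    {n N : ℕ} (h : n + 1 ≤ N) :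
    newtonSum t c s w n = ∑ j ∈ range N, w n j * newtonBasis t c s j := by
  refine sum_subset (range_subset_range.mpr h) fun j _ hj => ?_
  rw [hw n j (by simpa using hj), zero_mul]

lemma newtonSum_recurrence (ht : ∀ j, t j ≠ 0) {w : ℕ → ℕ → ℝ}
    (hw : ∀ n j, n < j → w n j = 0) {α β γ δ : ℝ} {m : ℕ}
    (h0 : α * w (m + 2) 0 - β * w (m + 1) 0 + γ * w m 0
      + (1 + c * t 0 ^ 2) * (δ / t 0 * w (m + 1) 0) = 0)
    (hsucc : ∀ j, α * w (m + 2) (j + 1) - β * w (m + 1) (j + 1) + γ * w m (j + 1)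
      + (1 + c * t (j + 1) ^ 2) * (δ / t (j + 1) * w (m + 1) (j + 1))
      = δ / t j * w (m + 1) j) :
    α * newtonSum t c s w (m + 2)
      = (β - s * δ) * newtonSum t c s w (m + 1) - γ * newtonSum t c s w m := by
  rw [newtonSum_eq_sum_range hw (by omega : m + 1 + 1 ≤ m + 3),
    newtonSum_eq_sum_range hw (by omega : m + 1 ≤ m + 3)]
  refine sum_mul_newtonBasis_recurrence (w := fun j => δ / t j * w (m + 1) j) (fun j => ?_)
    (by simp [hw (m + 1) (m + 2) (by omega)]) h0 hsucc
  field_simp [ht j]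

end NewtonBasis

lemma eq_of_three_term_recurrence {R : Type*} [CommRing R] [IsDomain R] {f g α β γ : ℕ → R}
    (hα : ∀ m, α m ≠ 0)
    (hf : ∀ m, α m * f (m + 2) = β m * f (m + 1) - γ m * f m)
    (hg : ∀ m, α m * g (m + 2) = β m * g (m + 1) - γ m * g m)
    (h0 : f 0 = g 0) (h1 : f 1 = g 1) : f = g := by
  funext n
  induction n using Nat.twoStepInduction with
  | zero => exact h0
  | one => exact h1
  | more m hm hm1 => exact mul_left_cancel₀ (hα m) (by rw [hf, hg, hm, hm1])

section Weights

variable {q a : ℝ}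

noncomputable def dualWeight (q a : ℝ) (n j : ℕ) : ℝ :=
  (∏ i ∈ range j, q ^ (i + 1)) * qPoch q⁻¹ (q ^ n) j /
    (qPoch (q ^ 2) (a * q ^ 2) j * qPoch q q j)

noncomputable def evenWeight (q a : ℝ) (n j : ℕ) : ℝ :=
  q ^ j * qPoch (q ^ 2)⁻¹ ((q ^ 2) ^ n) j /
    (qPoch (q ^ 2) (a * q ^ 2) j * qPoch (q ^ 2) (q ^ 2) j)

noncomputable def oddWeight (q a : ℝ) (n j : ℕ) : ℝ :=
  q ^ n / q ^ j * qPoch (q ^ 2)⁻¹ ((q ^ 2) ^ n) j /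
    (qPoch (q ^ 2) (a * q ^ 2) j * qPoch (q ^ 2) (q ^ 2) j)

lemma dualWeight_zero (n : ℕ) : dualWeight q a n 0 = 1 := by
  simp [dualWeight, qPoch]

lemma evenWeight_zero (n : ℕ) : evenWeight q a n 0 = 1 := by
  simp [evenWeight, qPoch]

lemma oddWeight_zero (n : ℕ) : oddWeight q a n 0 = q ^ n := by
  simp [oddWeight, qPoch]

lemma dualWeight_eq_zero (hq : q ≠ 0) {n j : ℕ} (h : n < j) : dualWeight q a n j = 0 := by
  simp [dualWeight, qPoch_inv_pow_eq_zero hq h]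

lemma evenWeight_eq_zero (hq : q ≠ 0) {n j : ℕ} (h : n < j) : evenWeight q a n j = 0 := by
  simp [evenWeight, qPoch_inv_pow_eq_zero (pow_ne_zero 2 hq) h]

lemma oddWeight_eq_zero (hq : q ≠ 0) {n j : ℕ} (h : n < j) : oddWeight q a n j = 0 := by
  simp [oddWeight, qPoch_inv_pow_eq_zero (pow_ne_zero 2 hq) h]

variable (hq0 : 0 < q) (hq1 : q < 1) (ha : a * q ^ 2 < 1)
include hq0 hq1 ha

lemma dualWeight_recurrence_step (m j : ℕ) :
    (1 - a * q ^ (2 * m + 4)) * dualWeight q a (m + 2) (j + 1)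
      - (1 + q) * dualWeight q a (m + 1) (j + 1)
      + q * (1 - q ^ (2 * m + 2)) * dualWeight q a m (j + 1)
      + (1 + a * q * (q ^ (j + 1)) ^ 2)
        * (q ^ (2 * m + 3) / q ^ (j + 1) * dualWeight q a (m + 1) (j + 1))
      = q ^ (2 * m + 3) / q ^ j * dualWeight q a (m + 1) j := by
  have hq : q ≠ 0 := hq0.ne'
  have hq2 : 0 ≤ q ^ 2 := sq_nonneg q
  have hq21 : q ^ 2 ≤ 1 := pow_le_one₀ hq0.le hq1.le
  have hD₁ := (qPoch_pos hq2 hq21 ha j).ne'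
  have hD₂ := (qPoch_pos hq0.le hq1.le hq1 j).ne'
  have hf₁ := (one_sub_mul_pow_pos hq2 hq21 ha j).ne'
  have hf₂ := (one_sub_mul_pow_pos hq0.le hq1.le hq1 j).ne'
  have hm : 1 - q ^ (m + 1) ≠ 0 := (sub_pos.mpr (pow_lt_one₀ hq0.le hq1 (by omega))).ne'
  have hshift : qPoch q⁻¹ (q ^ (m + 2)) (j + 1)
      = (1 - q ^ (m + 2)) * qPoch q⁻¹ (q ^ (m + 1)) j :=
    qPoch_inv_pow_succ_succ hq (m + 1) j
  simp only [dualWeight]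
  rw [hshift, qPoch_succ q⁻¹ (q ^ (m + 1)), qPoch_succ q⁻¹ (q ^ m),
    qPoch_inv_pow_eq_div hq hm, prod_range_succ, qPoch_succ, qPoch_succ q q, inv_pow]
  field_simp
  ring

lemma evenWeight_recurrence_step (m j : ℕ) :
    (1 - a * q ^ (2 * m + 4)) * evenWeight q a (m + 2) (j + 1)
      - (1 + q) * evenWeight q a (m + 1) (j + 1)
      + q * (1 - q ^ (2 * m + 2)) * evenWeight q a m (j + 1)
      + (1 + a * q * ((q ^ 2) ^ (j + 1)) ^ 2)
        * (q ^ (2 * m + 3) / (q ^ 2) ^ (j + 1) * evenWeight q a (m + 1) (j + 1))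
      = q ^ (2 * m + 3) / (q ^ 2) ^ j * evenWeight q a (m + 1) j := by
  have hq : q ^ 2 ≠ 0 := pow_ne_zero 2 hq0.ne'
  have hq2 : 0 ≤ q ^ 2 := sq_nonneg q
  have hq21 : q ^ 2 < 1 := pow_lt_one₀ hq0.le hq1 two_ne_zero
  have hD₁ := (qPoch_pos hq2 hq21.le ha j).ne'
  have hD₂ := (qPoch_pos hq2 hq21.le hq21 j).ne'
  have hf₁ := (one_sub_mul_pow_pos hq2 hq21.le ha j).ne'
  have hf₂ := (one_sub_mul_pow_pos hq2 hq21.le hq21 j).ne'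
  have hm : 1 - (q ^ 2) ^ (m + 1) ≠ 0 := (sub_pos.mpr (pow_lt_one₀ hq2 hq21 (by omega))).ne'
  have hshift : qPoch (q ^ 2)⁻¹ ((q ^ 2) ^ (m + 2)) (j + 1)
      = (1 - (q ^ 2) ^ (m + 2)) * qPoch (q ^ 2)⁻¹ ((q ^ 2) ^ (m + 1)) j :=
    qPoch_inv_pow_succ_succ hq (m + 1) j
  simp only [evenWeight]
  rw [hshift, qPoch_succ (q ^ 2)⁻¹ ((q ^ 2) ^ (m + 1)), qPoch_succ (q ^ 2)⁻¹ ((q ^ 2) ^ m),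
    qPoch_inv_pow_eq_div hq hm, qPoch_succ, qPoch_succ (q ^ 2) (q ^ 2), inv_pow]
  field_simp
  ring

lemma oddWeight_recurrence_step (m j : ℕ) :
    (1 - a * q ^ (2 * m + 4)) * oddWeight q a (m + 2) (j + 1)
      - (1 + q) * oddWeight q a (m + 1) (j + 1)
      + q * (1 - q ^ (2 * m + 2)) * oddWeight q a m (j + 1)
      + (1 + a * q * (q * (q ^ 2) ^ (j + 1)) ^ 2)
        * (q ^ (2 * m + 3) / (q * (q ^ 2) ^ (j + 1)) * oddWeight q a (m + 1) (j + 1))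
      = q ^ (2 * m + 3) / (q * (q ^ 2) ^ j) * oddWeight q a (m + 1) j := by
  have hq' : q ≠ 0 := hq0.ne'
  have hq : q ^ 2 ≠ 0 := pow_ne_zero 2 hq0.ne'
  have hq2 : 0 ≤ q ^ 2 := sq_nonneg q
  have hq21 : q ^ 2 < 1 := pow_lt_one₀ hq0.le hq1 two_ne_zero
  have hD₁ := (qPoch_pos hq2 hq21.le ha j).ne'
  have hD₂ := (qPoch_pos hq2 hq21.le hq21 j).ne'
  have hf₁ := (one_sub_mul_pow_pos hq2 hq21.le ha j).ne'
  have hf₂ := (one_sub_mul_pow_pos hq2 hq21.le hq21 j).ne'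
  have hm : 1 - (q ^ 2) ^ (m + 1) ≠ 0 := (sub_pos.mpr (pow_lt_one₀ hq2 hq21 (by omega))).ne'
  have hshift : qPoch (q ^ 2)⁻¹ ((q ^ 2) ^ (m + 2)) (j + 1)
      = (1 - (q ^ 2) ^ (m + 2)) * qPoch (q ^ 2)⁻¹ ((q ^ 2) ^ (m + 1)) j :=
    qPoch_inv_pow_succ_succ hq (m + 1) j
  simp only [oddWeight]
  rw [hshift, qPoch_succ (q ^ 2)⁻¹ ((q ^ 2) ^ (m + 1)), qPoch_succ (q ^ 2)⁻¹ ((q ^ 2) ^ m),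
    qPoch_inv_pow_eq_div hq hm, qPoch_succ, qPoch_succ (q ^ 2) (q ^ 2), inv_pow]
  field_simp
  ring

end Weights

section Expansions

variable {q a : ℝ} (hq0 : 0 < q) (hq1 : q < 1) (ha : a * q ^ 2 < 1) (s : ℝ)
include hq0 hq1 ha

lemma newtonSum_dualWeight_recurrence (m : ℕ) :
    (1 - a * q ^ (2 * m + 4)) * newtonSum (q ^ ·) (a * q) s (dualWeight q a) (m + 2)
      = (1 + q - s * q ^ (2 * m + 3)) * newtonSum (q ^ ·) (a * q) s (dualWeight q a) (m + 1)
        - q * (1 - q ^ (2 * m + 2)) * newtonSum (q ^ ·) (a * q) s (dualWeight q a) m :=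
  newtonSum_recurrence (fun j => pow_ne_zero j hq0.ne') (fun _ _ => dualWeight_eq_zero hq0.ne')
    (by simp only [dualWeight_zero, pow_zero]; ring) (dualWeight_recurrence_step hq0 hq1 ha m)

lemma newtonSum_evenWeight_recurrence (m : ℕ) :
    (1 - a * q ^ (2 * m + 4)) * newtonSum ((q ^ 2) ^ ·) (a * q) s (evenWeight q a) (m + 2)
      = (1 + q - s * q ^ (2 * m + 3))
          * newtonSum ((q ^ 2) ^ ·) (a * q) s (evenWeight q a) (m + 1)
        - q * (1 - q ^ (2 * m + 2)) * newtonSum ((q ^ 2) ^ ·) (a * q) s (evenWeight q a) m :=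
  newtonSum_recurrence (fun j => pow_ne_zero j (pow_ne_zero 2 hq0.ne'))
    (fun _ _ => evenWeight_eq_zero hq0.ne') (by simp only [evenWeight_zero, pow_zero]; ring)
    (evenWeight_recurrence_step hq0 hq1 ha m)

lemma newtonSum_oddWeight_recurrence (m : ℕ) :
    (1 - a * q ^ (2 * m + 4)) * newtonSum (q * (q ^ 2) ^ ·) (a * q) s (oddWeight q a) (m + 2)
      = (1 + q - s * q ^ (2 * m + 3))
          * newtonSum (q * (q ^ 2) ^ ·) (a * q) s (oddWeight q a) (m + 1)
        - q * (1 - q ^ (2 * m + 2)) * newtonSum (q * (q ^ 2) ^ ·) (a * q) s (oddWeight q a) m :=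
  newtonSum_recurrence (fun j => mul_ne_zero hq0.ne' (pow_ne_zero j (pow_ne_zero 2 hq0.ne')))
    (fun _ _ => oddWeight_eq_zero hq0.ne')
    (by have := hq0.ne'; simp only [oddWeight_zero, pow_zero, mul_one]; field_simp; ring)
    (oddWeight_recurrence_step hq0 hq1 ha m)

lemma one_sub_mul_pow_two_mul_add_four_ne_zero (m : ℕ) : 1 - a * q ^ (2 * m + 4) ≠ 0 := by
  rw [show a * q ^ (2 * m + 4) = a * q ^ 2 * (q ^ 2) ^ (m + 1) by ring]
  exact (one_sub_mul_pow_pos (sq_nonneg q) (pow_le_one₀ hq0.le hq1.le) ha (m + 1)).ne'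

lemma newtonSum_dualWeight_eq_evenWeight :
    newtonSum (q ^ ·) (a * q) s (dualWeight q a)
      = newtonSum ((q ^ 2) ^ ·) (a * q) s (evenWeight q a) := by
  refine eq_of_three_term_recurrence (one_sub_mul_pow_two_mul_add_four_ne_zero hq0 hq1 ha)
    (newtonSum_dualWeight_recurrence hq0 hq1 ha s) (newtonSum_evenWeight_recurrence hq0 hq1 ha s)
    (by rw [newtonSum_zero, newtonSum_zero, dualWeight_zero, evenWeight_zero]) ?_
  have h₁ : 1 - q ^ 2 * a ≠ 0 := (sub_pos.mpr (by rwa [mul_comm])).ne'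
  have h₂ : 1 - q ≠ 0 := (sub_pos.mpr hq1).ne'
  have h₃ : 1 - q ^ 2 ≠ 0 := (sub_pos.mpr (pow_lt_one₀ hq0.le hq1 two_ne_zero)).ne'
  rw [newtonSum_one, newtonSum_one, dualWeight_zero, evenWeight_zero]
  simp only [dualWeight, evenWeight, qPoch, prod_range_one, zero_add, pow_zero, pow_one, mul_one]
  field_simp

lemma newtonSum_dualWeight_eq_oddWeight :
    newtonSum (q ^ ·) (a * q) s (dualWeight q a)
      = newtonSum (q * (q ^ 2) ^ ·) (a * q) s (oddWeight q a) := by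
  refine eq_of_three_term_recurrence (one_sub_mul_pow_two_mul_add_four_ne_zero hq0 hq1 ha)
    (newtonSum_dualWeight_recurrence hq0 hq1 ha s) (newtonSum_oddWeight_recurrence hq0 hq1 ha s)
    (by rw [newtonSum_zero, newtonSum_zero, dualWeight_zero, oddWeight_zero, pow_zero]) ?_
  have hq : q ≠ 0 := hq0.ne'
  have h₁ : 1 - q ^ 2 * a ≠ 0 := (sub_pos.mpr (by rwa [mul_comm])).ne'
  have h₂ : 1 - q ≠ 0 := (sub_pos.mpr hq1).ne'
  have h₃ : 1 - q ^ 2 ≠ 0 := (sub_pos.mpr (pow_lt_one₀ hq0.le hq1 two_ne_zero)).ne'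
  rw [newtonSum_one, newtonSum_one, dualWeight_zero, oddWeight_zero]
  simp only [dualWeight, oddWeight, qPoch, prod_range_one, zero_add, pow_zero, pow_one, mul_one]
  field_simp
  ring

end Expansions

section Specializations

variable {q : ℝ}

noncomputable def dualMu (q a : ℝ) (x : ℕ) : ℝ := (q ^ x)⁻¹ + a * q ^ (x + 1)

lemma zpow_neg_two_mul (q : ℝ) (k : ℕ) : q ^ (-(2 * k : ℤ)) = ((q ^ 2) ^ k)⁻¹ := by
  rw [zpow_neg, zpow_mul, zpow_ofNat, zpow_natCast]

lemma prod_neg_pow_div_pow (q : ℝ) (n j : ℕ) :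
    ∏ i ∈ range j, -((q ^ 2) ^ n / (q ^ 2) ^ i)
      = (-1) ^ j * q ^ (2 * n * j) / q ^ (j * (j - 1)) := by
  simp_rw [← neg_div, ← pow_mul]
  rw [prod_div_distrib, prod_const, card_range, prod_pow_eq_pow_sum, ← mul_sum,
    mul_comm 2 (∑ i ∈ range j, i), sum_range_id_mul_two, neg_pow, ← pow_mul]

lemma dualDiscreteQUltra_eq_newtonSum (hq : q ≠ 0) (a : ℝ) (n x : ℕ) :
    dualDiscreteQUltra q a n x
      = newtonSum (q ^ ·) (a * q) (dualMu q a x) (dualWeight q a) n := by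
  refine sum_congr rfl fun j _ => ?_
  have basis : qPoch q (q ^ (-(x : ℤ))) j * qPoch q (a * q ^ (x + 1)) j
      = newtonBasis (q ^ ·) (a * q) (dualMu q a x) j := by
    rw [zpow_neg, zpow_natCast, qPoch, qPoch, newtonBasis, ← prod_mul_distrib]
    refine prod_congr rfl fun i _ => ?_
    have : q ^ x ≠ 0 := pow_ne_zero x hq
    simp only [dualMu]
    field_simp
    ring
  have weight : qPoch q (q ^ (-(n : ℤ))) j * (-q ^ (n + 1)) ^ j
      = (∏ i ∈ range j, q ^ (i + 1)) * qPoch q⁻¹ (q ^ n) j := by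
    rw [zpow_neg, zpow_natCast, ← qPoch_inv_pow_mul_prod hq, mul_left_comm, ← prod_mul_distrib,
      pow_eq_prod_const (-q ^ (n + 1)) j]
    congr 1
    refine prod_congr rfl fun i _ => ?_
    have : q ^ i ≠ 0 := pow_ne_zero i hq
    field_simp
    ring
  rw [dualWeight, ← basis]
  linear_combination (qPoch q (q ^ (-(x : ℤ))) j * qPoch q (a * q ^ (x + 1)) j
    / (qPoch (q ^ 2) (a * q ^ 2) j * qPoch q q j)) * weight

lemma newtonSum_evenWeight_eq (hq : q ≠ 0) (a : ℝ) (k n : ℕ) :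
    newtonSum ((q ^ 2) ^ ·) (a * q) (dualMu q a (2 * k)) (evenWeight q a) n =
      ∑ j ∈ range (n + 1),
        qPoch (q ^ 2) (q ^ (-(2 * k : ℤ))) j * qPoch (q ^ 2) (a * q ^ (2 * k + 1)) j *
            qPoch (q ^ 2) (q ^ (-(2 * n : ℤ))) j /
          (qPoch (q ^ 2) (a * q ^ 2) j * qPoch (q ^ 2) (q ^ 2) j) *
          ((-1) ^ j * q ^ (-((j * (j - 1) : ℕ) : ℤ)) * q ^ ((2 * n + 1) * j)) := by
  refine sum_congr rfl fun j _ => ?_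
  have basis : qPoch (q ^ 2) (q ^ (-(2 * k : ℤ))) j * qPoch (q ^ 2) (a * q ^ (2 * k + 1)) j
      = newtonBasis ((q ^ 2) ^ ·) (a * q) (dualMu q a (2 * k)) j := by
    rw [zpow_neg_two_mul, qPoch, qPoch, newtonBasis, ← prod_mul_distrib]
    refine prod_congr rfl fun i _ => ?_
    have : q ^ 2 ≠ 0 := pow_ne_zero 2 hq
    simp only [dualMu, pow_mul]
    field_simp
    ring
  have weight : qPoch (q ^ 2) (q ^ (-(2 * n : ℤ))) j
      * ((-1) ^ j * q ^ (-((j * (j - 1) : ℕ) : ℤ)) * q ^ ((2 * n + 1) * j))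
      = q ^ j * qPoch (q ^ 2)⁻¹ ((q ^ 2) ^ n) j := by
    rw [zpow_neg_two_mul, ← qPoch_inv_pow_mul_prod (pow_ne_zero 2 hq), prod_neg_pow_div_pow,
      zpow_neg, zpow_natCast]
    have : q ^ (j * (j - 1)) ≠ 0 := pow_ne_zero _ hq
    field_simp
    ring
  rw [evenWeight, ← basis]
  linear_combination -(qPoch (q ^ 2) (q ^ (-(2 * k : ℤ))) j
    * qPoch (q ^ 2) (a * q ^ (2 * k + 1)) j
    / (qPoch (q ^ 2) (a * q ^ 2) j * qPoch (q ^ 2) (q ^ 2) j)) * weight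

lemma newtonSum_oddWeight_eq (hq : q ≠ 0) (a : ℝ) (k n : ℕ) :
    newtonSum (q * (q ^ 2) ^ ·) (a * q) (dualMu q a (2 * k + 1)) (oddWeight q a) n =
      q ^ n *
        ∑ j ∈ range (n + 1),
          qPoch (q ^ 2) (q ^ (-(2 * k : ℤ))) j * qPoch (q ^ 2) (a * q ^ (2 * k + 3)) j *
              qPoch (q ^ 2) (q ^ (-(2 * n : ℤ))) j /
            (qPoch (q ^ 2) (a * q ^ 2) j * qPoch (q ^ 2) (q ^ 2) j) *
            ((-1) ^ j * q ^ (-((j * (j - 1) : ℕ) : ℤ)) *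
              q ^ ((2 * (n : ℤ) - 1) * (j : ℤ))) := by
  rw [mul_sum]
  refine sum_congr rfl fun j _ => ?_
  have basis : qPoch (q ^ 2) (q ^ (-(2 * k : ℤ))) j * qPoch (q ^ 2) (a * q ^ (2 * k + 3)) j
      = newtonBasis (q * (q ^ 2) ^ ·) (a * q) (dualMu q a (2 * k + 1)) j := by
    rw [zpow_neg_two_mul, qPoch, qPoch, newtonBasis, ← prod_mul_distrib]
    refine prod_congr rfl fun i _ => ?_
    simp only [dualMu, pow_succ, pow_mul]
    field_simp
    ring
  have weight : qPoch (q ^ 2) (q ^ (-(2 * n : ℤ))) j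
      * ((-1) ^ j * q ^ (-((j * (j - 1) : ℕ) : ℤ)) * q ^ ((2 * (n : ℤ) - 1) * (j : ℤ)))
      = qPoch (q ^ 2)⁻¹ ((q ^ 2) ^ n) j / q ^ j := by
    rw [zpow_neg_two_mul, ← qPoch_inv_pow_mul_prod (pow_ne_zero 2 hq), prod_neg_pow_div_pow,
      zpow_neg, zpow_natCast,
      show (2 * (n : ℤ) - 1) * j = ((2 * n * j : ℕ) : ℤ) - (j : ℤ) by push_cast; ring,
      zpow_sub₀ hq, zpow_natCast, zpow_natCast]
    have : q ^ (j * (j - 1)) ≠ 0 := pow_ne_zero _ hq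
    field_simp
  rw [oddWeight, ← basis]
  linear_combination -(q ^ n * qPoch (q ^ 2) (q ^ (-(2 * k : ℤ))) j
    * qPoch (q ^ 2) (a * q ^ (2 * k + 3)) j
    / (qPoch (q ^ 2) (a * q ^ 2) j * qPoch (q ^ 2) (q ^ 2) j)) * weight

end Specializations


theorem dualDiscreteQUltra_factorization_general
    (q a : ℝ) (hq0 : 0 < q) (hq1 : q < 1)
    (ha1 : a < (q ^ 2)⁻¹) (k n : ℕ) :
    dualDiscreteQUltra q a n (2 * k) =
      ∑ j ∈ Finset.range (n + 1),
        qPoch (q ^ 2) (q ^ (-(2 * k : ℤ))) j * qPoch (q ^ 2) (a * q ^ (2 * k + 1)) j *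
            qPoch (q ^ 2) (q ^ (-(2 * n : ℤ))) j /
          (qPoch (q ^ 2) (a * q ^ 2) j * qPoch (q ^ 2) (q ^ 2) j) *
          ((-1) ^ j * q ^ (-((j * (j - 1) : ℕ) : ℤ)) * q ^ ((2 * n + 1) * j)) ∧
    dualDiscreteQUltra q a n (2 * k + 1) =
      q ^ n *
        ∑ j ∈ Finset.range (n + 1),
          qPoch (q ^ 2) (q ^ (-(2 * k : ℤ))) j * qPoch (q ^ 2) (a * q ^ (2 * k + 3)) j *
              qPoch (q ^ 2) (q ^ (-(2 * n : ℤ))) j /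
            (qPoch (q ^ 2) (a * q ^ 2) j * qPoch (q ^ 2) (q ^ 2) j) *
            ((-1) ^ j * q ^ (-((j * (j - 1) : ℕ) : ℤ)) *
              q ^ ((2 * (n : ℤ) - 1) * (j : ℤ))) := by
  have ha : a * q ^ 2 < 1 := (lt_inv_mul_iff₀' (by positivity)).1 (by rwa [mul_one])
  constructor
  · rw [dualDiscreteQUltra_eq_newtonSum hq0.ne', newtonSum_dualWeight_eq_evenWeight hq0 hq1 ha,
      newtonSum_evenWeight_eq hq0.ne']
  · rw [dualDiscreteQUltra_eq_newtonSum hq0.ne', newtonSum_dualWeight_eq_oddWeight hq0 hq1 ha,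
      newtonSum_oddWeight_eq hq0.ne']

theorem dualDiscreteQUltra_factorization
    (q a : ℝ) (hq0 : 0 < q) (hq1 : q < 1)
    (ha0 : 0 < a) (ha1 : a < (q ^ 2)⁻¹) (k n : ℕ) :
    dualDiscreteQUltra q a n (2 * k) =
      ∑ j ∈ Finset.range (n + 1),
        qPoch (q ^ 2) (q ^ (-(2 * k : ℤ))) j * qPoch (q ^ 2) (a * q ^ (2 * k + 1)) j *
            qPoch (q ^ 2) (q ^ (-(2 * n : ℤ))) j /
          (qPoch (q ^ 2) (a * q ^ 2) j * qPoch (q ^ 2) (q ^ 2) j) *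
          ((-1) ^ j * q ^ (-((j * (j - 1) : ℕ) : ℤ)) * q ^ ((2 * n + 1) * j)) ∧
    dualDiscreteQUltra q a n (2 * k + 1) =
      q ^ n *
        ∑ j ∈ Finset.range (n + 1),
          qPoch (q ^ 2) (q ^ (-(2 * k : ℤ))) j * qPoch (q ^ 2) (a * q ^ (2 * k + 3)) j *
              qPoch (q ^ 2) (q ^ (-(2 * n : ℤ))) j /
            (qPoch (q ^ 2) (a * q ^ 2) j * qPoch (q ^ 2) (q ^ 2) j) *
            ((-1) ^ j * q ^ (-((j * (j - 1) : ℕ) : ℤ)) *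
              q ^ ((2 * (n : ℤ) - 1) * (j : ℤ))) :=
  dualDiscreteQUltra_factorization_general q a hq0 hq1 ha1 k n
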